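/- Enforcement Soundness: for every system p and every closed formula φ ∈ SHMLnf, if φ is satisfiable then the instrumented system ⟦φ⟧e[p] satisfies φ, i.e., φ ∈ Sat implies ⟦φ⟧e[p] ∈ ⟦φ⟧. -/

import Mathlib

set_option autoImplicit false

/-- A labelled transition system over observable actions `Act`;
`none` plays the role of the silent action τ. -/
structure LTS (Act : Type) where
  S : Type
  Tr : S → Option Act → S → Prop

namespace Enf

open scoped Classical

variable {Act : Type}

/-- Zero or more silent steps. -/
def TauStar (L : LTS Act) : L.S → L.S → Prop :=
  Relation.ReflTransGen (fun p q => L.Tr p none q)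

/-- The weak transition `p =a=> q`. -/
def WStep (L : LTS Act) (p : L.S) (a : Act) (q : L.S) : Prop :=
  ∃ p₁ p₂, TauStar L p p₁ ∧ L.Tr p₁ (some a) p₂ ∧ TauStar L p₂ q

/-- Weak trace `p =t=> q`. -/
inductive WTrace (L : LTS Act) : L.S → List Act → L.S → Prop
  | nil {p q : L.S} : TauStar L p q → WTrace L p [] q
  | cons {p r q : L.S} {a : Act} {t : List Act} :
      WStep L p a r → WTrace L r t q → WTrace L p (a :: t) q

/-- SHML formulas: truth, falsehood, fixpoint variables, finite conjunctions,
modalities `[η]φ` (a guard set of actions together with an action-indexed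
continuation, representing the symbolic action and the matching substitutions),
and greatest fixpoints. -/
inductive Frm (Act : Type) : Type where
  | tt : Frm Act
  | ff : Frm Act
  | var : ℕ → Frm Act
  | conj : (n : ℕ) → (Fin n → Frm Act) → Frm Act
  | box : Set Act → (Act → Frm Act) → Frm Act
  | max : ℕ → Frm Act → Frm Act

namespace Frm

/-- Free fixpoint variables. -/
def fv : Frm Act → Set ℕ
  | .tt => ∅
  | .ff => ∅
  | .var X => {X}
  | .conj _ f => ⋃ i, fv (f i)
  | .box G k => ⋃ a ∈ G, fv (k a)
  | .max X φ => fv φ \ {X}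

def Closed (φ : Frm Act) : Prop := fv φ = ∅

/-- Substitution `φ[ψ/X]` (of a closed formula `ψ`). -/
def subst : Frm Act → ℕ → Frm Act → Frm Act
  | .tt, _, _ => .tt
  | .ff, _, _ => .ff
  | .var Y, X, ψ => if Y = X then ψ else .var Y
  | .conj n f, X, ψ => .conj n (fun i => subst (f i) X ψ)
  | .box G k, X, ψ => .box G (fun a => subst (k a) X ψ)
  | .max Y φ, X, ψ => if Y = X then .max Y φ else .max Y (subst φ X ψ)

/-- The normal-form fragment SHMLnf: conjunctions are conjunctions of
modalities with pairwise-disjoint guards, and each greatest fixpoint binds a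
variable occurring free in its body. -/
inductive IsNF : Frm Act → Prop
  | tt : IsNF .tt
  | ff : IsNF .ff
  | var (X : ℕ) : IsNF (.var X)
  | conj (n : ℕ) (G : Fin n → Set Act) (k : Fin n → Act → Frm Act)
      (hdisj : ∀ i j : Fin n, i ≠ j → ∀ a : Act, a ∈ G i → a ∉ G j)
      (hk : ∀ i : Fin n, ∀ a ∈ G i, IsNF (k i a)) :
      IsNF (.conj n fun i => .box (G i) (k i))
  | max (X : ℕ) (φ : Frm Act) (hfree : X ∈ fv φ) (hφ : IsNF φ) : IsNF (.max X φ)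

/-- `gvar X φ`: the variable `X` does not occur unguarded (i.e. outside every
modality) in `φ`. -/
def gvar (X : ℕ) : Frm Act → Prop
  | .tt => True
  | .ff => True
  | .var Y => Y ≠ X
  | .conj _ f => ∀ i, gvar X (f i)
  | .box _ _ => True
  | .max Y φ => Y = X ∨ gvar X φ

/-- A formula is guarded if every occurrence of a fixpoint variable lies
beneath a modality. -/
def Guarded : Frm Act → Prop
  | .tt => True
  | .ff => True
  | .var _ => True
  | .conj _ f => ∀ i, Guarded (f i)
  | .box G k => ∀ a ∈ G, Guarded (k a)
  | .max X φ => gvar X φ ∧ Guarded φ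

/-- Number of top-level greatest-fixpoint binders. -/
def topMax : Frm Act → ℕ
  | .max _ φ => topMax φ + 1
  | _ => 0

end Frm

/-- Denotational semantics of (possibly open) formulas, relative to an
environment mapping fixpoint variables to sets of states; `max` is interpreted
as the greatest fixpoint of the induced monotone map. -/
def sem (L : LTS Act) : Frm Act → (ℕ → Set L.S) → Set L.S
  | .tt, _ => Set.univ
  | .ff, _ => ∅
  | .var X, ρ => ρ X
  | .conj _ f, ρ => ⋂ i, sem L (f i) ρ
  | .box G k, ρ => {p | ∀ a ∈ G, ∀ q, WStep L p a q → q ∈ sem L (k a) ρ}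
  | .max X φ, ρ => ⋃₀ {S | S ⊆ sem L φ (Function.update ρ X S)}

/-- Semantics of closed formulas. -/
def Sem (L : LTS Act) (φ : Frm Act) : Set L.S := sem L φ fun _ => ∅

/-- Satisfiability. -/
def SatIn (L : LTS Act) (φ : Frm Act) : Prop := (Sem L φ).Nonempty

/-- The violation relation `p ⊨v^t φ`, defined as the least relation closed
under the given rules. -/
inductive Viol (L : LTS Act) : L.S → List Act → Frm Act → Prop
  | ff (p : L.S) : Viol L p [] .ff
  | conj {p : L.S} {t : List Act} {n : ℕ} {f : Fin n → Frm Act} (j : Fin n) :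
      Viol L p t (f j) → Viol L p t (.conj n f)
  | box {p p' : L.S} {t : List Act} {a : Act} {G : Set Act} {k : Act → Frm Act} :
      a ∈ G → WStep L p a p' → Viol L p' t (k a) → Viol L p (a :: t) (.box G k)
  | max {p : L.S} {t : List Act} {X : ℕ} {φ : Frm Act} :
      Viol L p t (Frm.subst φ X (.max X φ)) → Viol L p t (.max X φ)

/-- Transducers (enforcement monitors): identity, symbolic transformation
prefixes (a guard set of extended input actions, with `none` standing for the
insertion pattern •, an output per matched input, with `none` standing for τ,
and a continuation per matched input), finite selections, recursion, and
recursion variables. -/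
inductive Trn (Act : Type) : Type where
  | id : Trn Act
  | prf : Set (Option Act) → (Option Act → Option Act) → (Option Act → Trn Act) → Trn Act
  | sel : (n : ℕ) → (Fin n → Trn Act) → Trn Act
  | fix : ℕ → Trn Act → Trn Act
  | var : ℕ → Trn Act

namespace Trn

def tsubst : Trn Act → ℕ → Trn Act → Trn Act
  | .id, _, _ => .id
  | .prf G out k, x, s => .prf G out fun γ => tsubst (k γ) x s
  | .sel n f, x, s => .sel n fun i => tsubst (f i) x s
  | .fix y e, x, s => if y = x then .fix y e else .fix y (tsubst e x s)
  | .var y, x, s => if y = x then s else .var y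

end Trn

/-- Transducer transitions: labels are pairs (input, output) where input
`none` is the insertion pattern • and output `none` is τ. -/
inductive TStep : Trn Act → Option Act × Option Act → Trn Act → Prop
  | id (a : Act) : TStep .id (some a, some a) .id
  | prf {G : Set (Option Act)} {out : Option Act → Option Act}
      {k : Option Act → Trn Act} {γ : Option Act} (h : γ ∈ G) :
      TStep (.prf G out k) (γ, out γ) (k γ)
  | sel {n : ℕ} {f : Fin n → Trn Act} {l : Option Act × Option Act}
      {e' : Trn Act} (i : Fin n) (h : TStep (f i) l e') :
      TStep (.sel n f) l e'
  | fix {x : ℕ} {e : Trn Act} {l : Option Act × Option Act} {e' : Trn Act}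
      (h : TStep (Trn.tsubst e x (.fix x e)) l e') :
      TStep (.fix x e) l e'

/-- Instrumentation of a transducer on a system. -/
inductive IStep (L : LTS Act) : Trn Act × L.S → Option Act → Trn Act × L.S → Prop
  | trn {e e' : Trn Act} {p p' : L.S} {a : Act} {μ : Option Act} :
      L.Tr p (some a) p' → TStep e (some a, μ) e' → IStep L (e, p) μ (e', p')
  | asy {e : Trn Act} {p p' : L.S} :
      L.Tr p none p' → IStep L (e, p) none (e, p')
  | ins {e e' : Trn Act} {p : L.S} {μ : Option Act} :
      TStep e (none, μ) e' → IStep L (e, p) μ (e', p)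
  | ter {e : Trn Act} {p p' : L.S} {a : Act} :
      L.Tr p (some a) p' →
      (∀ μ e', ¬ TStep e (some a, μ) e') →
      (∀ μ e', ¬ TStep e (none, μ) e') →
      IStep L (e, p) (some a) (Trn.id, p')

/-- The LTS of monitored systems `e[p]`. -/
def instLTS (L : LTS Act) : LTS Act := ⟨Trn Act × L.S, IStep L⟩

/-- Strong bisimulations between (the state spaces of) two LTSs. -/
def IsBisim (L₁ L₂ : LTS Act) (R : L₁.S → L₂.S → Prop) : Prop :=
  ∀ s r, R s r →
    (∀ μ s', L₁.Tr s μ s' → ∃ r', L₂.Tr r μ r' ∧ R s' r') ∧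
    (∀ μ r', L₂.Tr r μ r' → ∃ s', L₁.Tr s μ s' ∧ R s' r')

/-- Strong bisimilarity. -/
def Bisim (L₁ L₂ : LTS Act) (s : L₁.S) (r : L₂.S) : Prop :=
  ∃ R, IsBisim L₁ L₂ R ∧ R s r

/-- The synthesis function `⟦-⟧e` from SHMLnf formulas to transducers:
formula variable `X` becomes monitor variable `X+1`; `tt` and `ff` become the
identity monitor; `max X.φ` becomes the corresponding recursive monitor; and a
normalised conjunction of modalities becomes a recursive selection (on the
fresh variable `0`) of symbolic prefixes that suppress (output τ, continue as
the recursion variable) actions whose continuation formula is `ff` and pass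
through all other matched actions, continuing with the synthesis of the
respective continuation formula. -/
noncomputable def synth : Frm Act → Trn Act
  | .tt => .id
  | .ff => .id
  | .var X => .var (X + 1)
  | .max X φ => .fix (X + 1) (synth φ)
  | .box G k =>
      .prf {γ | ∃ a ∈ G, γ = some a}
        (fun γ =>
          match γ with
          | some a => if k a = Frm.ff then none else some a
          | none => none)
        (fun γ =>
          match γ with
          | some a => if k a = Frm.ff then Trn.var 0 else synth (k a)
          | none => .id)
  | .conj n f => .fix 0 (.sel n fun i => synth (f i))

/-- Fuelled residual function (the fuel is consumed by fixpoint unfoldings;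
on guarded closed SHMLnf formulas `topMax φ + 1` units of fuel suffice). -/
noncomputable def afterFuel : ℕ → Frm Act → Act → Frm Act
  | 0, _, _ => .tt
  | n + 1, φ, a =>
    match φ with
    | .max X ψ => afterFuel n (Frm.subst ψ X (.max X ψ)) a
    | .conj m f =>
        if h : ∃ i : Fin m, ∃ G : Set Act, ∃ k : Act → Frm Act,
            f i = Frm.box G k ∧ a ∈ G
        then h.choose_spec.choose_spec.choose a
        else .tt
    | ψ => ψ

/-- The residual `after(φ, a)` of a guarded closed SHMLnf formula. -/
noncomputable def after (φ : Frm Act) (a : Act) : Frm Act :=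
  afterFuel (Frm.topMax φ + 1) φ a

/-- Satisfaction relations (the coinductive rules of `⊨s`). -/
def IsSatRel (L : LTS Act) (R : L.S → Frm Act → Prop) : Prop :=
  (∀ p, ¬ R p .ff) ∧
  (∀ p (n : ℕ) (f : Fin n → Frm Act), R p (.conj n f) → ∀ i, R p (f i)) ∧
  (∀ p (G : Set Act) (k : Act → Frm Act), R p (.box G k) →
      ∀ a ∈ G, ∀ q, WStep L p a q → R q (k a)) ∧
  (∀ p (X : ℕ) (φ : Frm Act), R p (.max X φ) → R p (Frm.subst φ X (.max X φ)))

/-- The largest satisfaction relation `⊨s`. -/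
def SatCo (L : LTS Act) (p : L.S) (φ : Frm Act) : Prop :=
  ∃ R, IsSatRel L R ∧ R p φ

/-!
Every monitor that the instrumented system `(synth φ, p)` can reach behaves like `synth χ`
for some closed normal-form residual `χ ≠ ff` of `φ`. Silent steps of `p` and suppressed
actions (those whose continuation is `ff`) leave the monitor unchanged; an action `a` of a
guard `G i` is emitted only when its continuation `k i a` is not `ff`, and the monitor then
behaves like `synth (k i a)`. Pairing the instrumented states with these residuals and their
conjuncts therefore gives a satisfaction relation, and every satisfaction relation is
contained in the greatest-fixpoint semantics. The latter is the usual coinduction on open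
formulas under a closing simultaneous substitution.
-/

namespace Frm

theorem subst_eq_ff_iff {φ θ : Frm Act} {X : ℕ} (hθ : θ ≠ .ff) :
    φ.subst X θ = .ff ↔ φ = .ff := by
  cases φ <;> simp only [subst] <;> try split_ifs
  all_goals simp_all

theorem fv_subst {θ : Frm Act} (φ : Frm Act) (X : ℕ) (hθ : θ.Closed) :
    (φ.subst X θ).fv = φ.fv \ {X} := by
  induction φ with
  | tt | ff => simp [subst, fv]
  | var Y =>
    by_cases h : Y = X
    · simp only [subst, fv, h, Set.sdiff_self, if_true]; exact hθ
    · simp [subst, fv, h, Ne.symm h]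
  | conj n f ih => simp [subst, fv, ih, Set.iUnion_sdiff]
  | box G k ih => simp [subst, fv, ih, Set.iUnion_sdiff]
  | max Y ψ ih =>
    by_cases h : Y = X
    · simp [subst, fv, h]
    · simp [subst, fv, h, ih, Set.sdiff_sdiff_comm]

theorem IsNF.subst {φ θ : Frm Act} {X : ℕ} (hφ : φ.IsNF) (hθ : θ.IsNF) (hθc : θ.Closed) :
    (φ.subst X θ).IsNF := by
  induction hφ with
  | tt => exact .tt
  | ff => exact .ff
  | var Y => by_cases h : Y = X <;> simp [Frm.subst, h, hθ, IsNF.var]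
  | conj n G k hdisj _ ih => exact .conj n G _ hdisj ih
  | max Y ψ hfree hψ ih =>
    by_cases h : Y = X
    · simpa [Frm.subst, h] using IsNF.max Y ψ hfree hψ
    · simp only [Frm.subst, if_neg h]
      exact .max Y _ (by rw [fv_subst ψ X hθc]; exact ⟨hfree, h⟩) ih

theorem Closed.unfold {X : ℕ} {φ : Frm Act} (h : (Frm.max X φ).Closed) :
    (φ.subst X (Frm.max X φ)).Closed :=
  (fv_subst φ X h).trans h

theorem IsNF.unfold {X : ℕ} {φ : Frm Act} (h : (Frm.max X φ).IsNF)
    (hc : (Frm.max X φ).Closed) : (φ.subst X (Frm.max X φ)).IsNF := by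
  cases h with
  | max _ _ hfree hφ => exact hφ.subst (.max X φ hfree hφ) hc

theorem IsNF.unfold_ne_ff {X : ℕ} {φ : Frm Act} (h : (Frm.max X φ).IsNF) :
    φ.subst X (Frm.max X φ) ≠ .ff := by
  rw [Ne, subst_eq_ff_iff (by simp)]
  rintro rfl
  cases h with
  | max _ _ hfree _ => exact hfree

theorem Closed.of_mem_guard {n : ℕ} {G : Fin n → Set Act} {k : Fin n → Act → Frm Act}
    (h : (conj n fun j => box (G j) (k j)).Closed) {i : Fin n} {a : Act} (ha : a ∈ G i) :
    (k i a).Closed :=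
  Set.eq_empty_iff_forall_notMem.2 fun z hz => by
    have : z ∈ (conj n fun j => box (G j) (k j)).fv :=
      Set.mem_iUnion.2 ⟨i, Set.mem_biUnion ha hz⟩
    rwa [h] at this

end Frm

/- `fv`, `sem` and `IsNF` ignore the continuations `k a` of a modality `box G k` with `a ∉ G`,
so a closed formula may still have free variables there, which later substitutions would
capture. `allFv` counts them, `tidySubst` replaces those continuations by `tt`, and
`GuardEq` is equality up to them. -/

def allFv : Frm Act → Set ℕ
  | .tt => ∅
  | .ff => ∅
  | .var X => {X}
  | .conj _ f => ⋃ i, allFv (f i)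
  | .box _ k => ⋃ a, allFv (k a)
  | .max X φ => allFv φ \ {X}

noncomputable def tidySubst : Frm Act → (ℕ → Frm Act) → Frm Act
  | .tt, _ => .tt
  | .ff, _ => .ff
  | .var X, σ => σ X
  | .conj n f, σ => .conj n fun i => tidySubst (f i) σ
  | .box G k, σ => .box G fun a => if a ∈ G then tidySubst (k a) σ else .tt
  | .max X φ, σ => .max X (tidySubst φ (Function.update σ X (.var X)))

inductive GuardEq : Frm Act → Frm Act → Prop
  | tt : GuardEq .tt .tt
  | ff : GuardEq .ff .ff
  | var (X : ℕ) : GuardEq (.var X) (.var X)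
  | conj {n : ℕ} {f g : Fin n → Frm Act} :
      (∀ i, GuardEq (f i) (g i)) → GuardEq (.conj n f) (.conj n g)
  | box {G : Set Act} {k k' : Act → Frm Act} :
      (∀ a ∈ G, GuardEq (k a) (k' a)) → GuardEq (.box G k) (.box G k')
  | max {X : ℕ} {φ ψ : Frm Act} : GuardEq φ ψ → GuardEq (.max X φ) (.max X ψ)

theorem Frm.subst_eq_self_of_notMem_allFv {φ θ : Frm Act} {X : ℕ} (h : X ∉ allFv φ) :
    φ.subst X θ = φ := by
  induction φ with
  | tt | ff => rfl
  | var Y =>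
    have hY : Y ≠ X := fun hY => h (by simp [allFv, hY])
    simp [subst, hY]
  | conj n f ih =>
    simp only [allFv, Set.mem_iUnion, not_exists] at h
    simp only [subst, fun i => ih i (h i)]
  | box G k ih =>
    simp only [allFv, Set.mem_iUnion, not_exists] at h
    simp only [subst, fun a => ih a (h a)]
  | max Y ψ ih =>
    by_cases hY : Y = X
    · simp [subst, hY]
    · have hX : X ∉ allFv ψ := fun hX => h ⟨hX, Ne.symm hY⟩
      simp [subst, hY, ih hX]

theorem allFv_tidySubst_subset (φ : Frm Act) (σ : ℕ → Frm Act) :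
    allFv (tidySubst φ σ) ⊆ ⋃ Y ∈ φ.fv, allFv (σ Y) := by
  induction φ generalizing σ with
  | tt | ff => simp [tidySubst, allFv]
  | var Y => simp [tidySubst, Frm.fv]
  | conj n f ih =>
    simp only [tidySubst, allFv, Set.iUnion_subset_iff]
    intro i z hz
    obtain ⟨Y, hY, hzY⟩ := Set.mem_iUnion₂.1 (ih i σ hz)
    exact Set.mem_iUnion₂.2 ⟨Y, Set.mem_iUnion.2 ⟨i, hY⟩, hzY⟩
  | box G k ih =>
    simp only [tidySubst, allFv, Set.iUnion_subset_iff]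
    intro a z hz
    split_ifs at hz with ha
    · obtain ⟨Y, hY, hzY⟩ := Set.mem_iUnion₂.1 (ih a σ hz)
      exact Set.mem_iUnion₂.2 ⟨Y, Set.mem_iUnion₂.2 ⟨a, ha, hY⟩, hzY⟩
    · simp [allFv] at hz
  | max X ψ ih =>
    rintro z ⟨hz, hzX⟩
    obtain ⟨Y, hY, hzY⟩ := Set.mem_iUnion₂.1 (ih _ hz)
    by_cases hYX : Y = X
    · subst hYX
      simp_all [allFv]
    · rw [Function.update_of_ne hYX] at hzY
      exact Set.mem_iUnion₂.2 ⟨Y, ⟨hY, hYX⟩, hzY⟩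

theorem subst_tidySubst (ψ : Frm Act) {σ : ℕ → Frm Act} {X : ℕ} (θ : Frm Act)
    (hX : σ X = .var X) (hσ : ∀ Y ≠ X, X ∉ allFv (σ Y)) :
    (tidySubst ψ σ).subst X θ = tidySubst ψ (Function.update σ X θ) := by
  induction ψ generalizing σ with
  | tt | ff => rfl
  | var Y =>
    by_cases hY : Y = X
    · subst hY
      simp [tidySubst, hX, Frm.subst]
    · simpa [tidySubst, hY] using Frm.subst_eq_self_of_notMem_allFv (hσ Y hY)
  | conj n f ih => simp only [tidySubst, Frm.subst, ih _ hX hσ]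
  | box G k ih =>
    simp only [tidySubst, Frm.subst]
    congr 1
    funext a
    split_ifs
    · exact ih a hX hσ
    · rfl
  | max Y ψ ih =>
    by_cases hY : Y = X
    · subst hY
      simp [tidySubst, Frm.subst]
    · have hXY : X ≠ Y := Ne.symm hY
      simp only [tidySubst, Frm.subst, if_neg hY]
      rw [ih (by rwa [Function.update_of_ne hXY]), Function.update_comm hXY]
      intro Z hZ
      by_cases hZY : Z = Y
      · subst hZY
        simpa [allFv] using hXY
      · rw [Function.update_of_ne hZY]
        exact hσ Z hZ

theorem guardEq_tidySubst_var (φ : Frm Act) : GuardEq (tidySubst φ .var) φ := by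
  induction φ with
  | tt => exact .tt
  | ff => exact .ff
  | var Y => exact .var Y
  | conj n f ih => exact .conj ih
  | box G k ih => exact .box fun a ha => by simpa [ha] using ih a
  | max Y ψ ih =>
    simp only [tidySubst, Function.update_eq_self]
    exact .max ih

theorem GuardEq.subst {φ ψ θ θ' : Frm Act} {X : ℕ} (h : GuardEq φ ψ)
    (hθ : GuardEq θ θ') :
    GuardEq (φ.subst X θ) (ψ.subst X θ') := by
  induction h with
  | tt => exact .tt
  | ff => exact .ff
  | var Y => by_cases hY : Y = X <;> simp [Frm.subst, hY, hθ, GuardEq.var]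
  | conj _ ih => exact .conj ih
  | box _ ih => exact .box ih
  | @max Y φ ψ h ih =>
    by_cases hY : Y = X
    · simpa [Frm.subst, hY] using GuardEq.max h
    · simpa [Frm.subst, hY] using GuardEq.max ih

section SatRel

variable {L : LTS Act} {R : L.S → Frm Act → Prop}

theorem IsSatRel.guardEq_closure (hR : IsSatRel L R) :
    IsSatRel L fun p ψ => ∃ χ, GuardEq ψ χ ∧ R p χ := by
  refine ⟨?_, ?_, ?_, ?_⟩
  · rintro p ⟨χ, h, hp⟩
    cases h
    exact hR.1 p hp
  · rintro p n f ⟨χ, h, hp⟩ i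
    cases h with
    | conj h => exact ⟨_, h i, hR.2.1 p n _ hp i⟩
  · rintro p G k ⟨χ, h, hp⟩ a ha q hq
    cases h with
    | box h => exact ⟨_, h a ha, hR.2.2.1 p G _ hp a ha q hq⟩
  · rintro p X φ ⟨χ, h, hp⟩
    cases h with
    | max h => exact ⟨_, h.subst (.max h), hR.2.2.2 p X _ hp⟩

theorem IsSatRel.subset_sem (hR : IsSatRel L R) (φ : Frm Act) {σ : ℕ → Frm Act}
    {ρ : ℕ → Set L.S} (hσ : ∀ Y, σ Y = .var Y ∨ allFv (σ Y) = ∅)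
    (hσφ : ∀ Y ∈ φ.fv, allFv (σ Y) = ∅)
    (hρ : ∀ Y ∈ φ.fv, {q | R q (σ Y)} ⊆ ρ Y) :
    {q | R q (tidySubst φ σ)} ⊆ sem L φ ρ := by
  induction φ generalizing σ ρ with
  | tt => exact Set.subset_univ _
  | ff => exact fun q hq => hR.1 q hq
  | var Y => exact hρ Y rfl
  | conj n f ih =>
    refine fun q hq => Set.mem_iInter.2 fun i => ih i hσ (fun Y hY => ?_) (fun Y hY => ?_)
      (hR.2.1 q n _ hq i)
    · exact hσφ Y (Set.mem_iUnion.2 ⟨i, hY⟩)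
    · exact hρ Y (Set.mem_iUnion.2 ⟨i, hY⟩)
  | box G k ih =>
    intro q hq a ha q' hq'
    have hk := hR.2.2.1 q G _ hq a ha q' hq'
    rw [if_pos ha] at hk
    refine ih a hσ (fun Y hY => ?_) (fun Y hY => ?_) hk
    · exact hσφ Y (Set.mem_biUnion ha hY)
    · exact hρ Y (Set.mem_biUnion ha hY)
  | max X ψ ih =>
    set θ := tidySubst (.max X ψ) σ
    have hθ : allFv θ = ∅ := Set.subset_empty_iff.1 fun z hz => by
      obtain ⟨Y, hY, hzY⟩ := Set.mem_iUnion₂.1 (allFv_tidySubst_subset _ σ hz)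
      rwa [hσφ Y hY] at hzY
    have hunfold : (tidySubst ψ (Function.update σ X (.var X))).subst X θ =
        tidySubst ψ (Function.update σ X θ) := by
      rw [subst_tidySubst ψ θ (Function.update_self ..), Function.update_idem]
      intro Y hY
      rw [Function.update_of_ne hY]
      rcases hσ Y with h | h <;> simp [h, allFv, Ne.symm hY]
    refine fun q hq => ⟨{r | R r θ}, fun r hr => ?_, hq⟩
    have hr' : R r ((tidySubst ψ (Function.update σ X (.var X))).subst X θ) :=
      hR.2.2.2 r X _ hr
    rw [hunfold] at hr'
    refine ih (fun Y => ?_) (fun Y hY => ?_) (fun Y hY => ?_) hr' <;>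
      rcases eq_or_ne Y X with rfl | hYX
    · simp [hθ]
    · simpa [Function.update_of_ne hYX] using hσ Y
    · simpa using hθ
    · simpa [Function.update_of_ne hYX] using hσφ Y ⟨hY, hYX⟩
    · simp
    · simpa [Function.update_of_ne hYX] using hρ Y ⟨hY, hYX⟩

theorem IsSatRel.mem_Sem (hR : IsSatRel L R) {φ : Frm Act} (hφ : φ.Closed) {p : L.S}
    (hp : R p φ) : p ∈ Sem L φ :=
  have hfv : φ.fv = ∅ := hφ
  hR.guardEq_closure.subset_sem φ (fun _ => .inl rfl) (by simp [hfv]) (by simp [hfv])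
    ⟨φ, guardEq_tidySubst_var φ, hp⟩

end SatRel

/- Monitor variable `0` occurs in `synth χ` only inside the `fix 0` of a conjunction, and in
normal form every modality lies in a conjunction. -/
theorem tsubst_synth_zero {χ : Frm Act} (h : χ.IsNF) (e : Trn Act) :
    (synth χ).tsubst 0 e = synth χ := by
  induction h with
  | tt | ff | var | conj => simp [synth, Trn.tsubst]
  | max Y ψ _ _ ih => simp [synth, Trn.tsubst, ih]

theorem tsubst_synth (χ : Frm Act) (X : ℕ) {θ : Frm Act} (hθ : θ ≠ .ff) :
    (synth χ).tsubst (X + 1) (synth θ) = synth (χ.subst X θ) := by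
  induction χ with
  | tt | ff => rfl
  | var Y => by_cases h : Y = X <;> simp [synth, Trn.tsubst, Frm.subst, h]
  | conj n f ih => simp [synth, Trn.tsubst, Frm.subst, ih]
  | box G k ih =>
    simp only [synth, Frm.subst, Trn.tsubst, Frm.subst_eq_ff_iff hθ]
    congr 2
    funext γ
    rcases γ with _ | a
    · rfl
    · by_cases h : k a = .ff <;> simp [h, Trn.tsubst, ih]
  | max Y ψ ih => by_cases h : Y = X <;> simp [synth, Trn.tsubst, Frm.subst, h, ih]

def Mimics (e : Trn Act) (χ : Frm Act) : Prop :=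
  ∀ l e', TStep e l e' ↔ TStep (synth χ) l e'

theorem mimics_synth (χ : Frm Act) : Mimics (synth χ) χ := fun _ _ => Iff.rfl

theorem tStep_synth_max_iff {X : ℕ} {φ : Frm Act} {l : Option Act × Option Act} {e' : Trn Act} :
    TStep (synth (.max X φ)) l e' ↔ TStep (synth (φ.subst X (.max X φ))) l e' := by
  rw [← tsubst_synth φ X (by simp)]
  exact ⟨fun | .fix h => h, .fix⟩

theorem Mimics.unfold {e : Trn Act} {X : ℕ} {φ : Frm Act} (h : Mimics e (.max X φ)) :
    Mimics e (φ.subst X (.max X φ)) :=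
  fun l e' => (h l e').trans tStep_synth_max_iff

theorem tStep_synth_conj {n : ℕ} {G : Fin n → Set Act} {k : Fin n → Act → Frm Act}
    (hk : ∀ j, ∀ a ∈ G j, (k j a).IsNF) {l : Option Act × Option Act} {e' : Trn Act}
    (h : TStep (synth (.conj n fun j => .box (G j) (k j))) l e') :
    ∃ j, ∃ a ∈ G j, l.1 = some a ∧
      (k j a = .ff ∧ l.2 = none ∧ e' = synth (.conj n fun j => .box (G j) (k j)) ∨
        k j a ≠ .ff ∧ l.2 = some a ∧ e' = synth (k j a)) := by
  cases h with
  | fix h =>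
    simp only [synth, Trn.tsubst] at h
    cases h with
    | sel j h =>
      cases h with
      | prf hγ =>
        obtain ⟨a, ha, rfl⟩ := hγ
        refine ⟨j, a, ha, rfl, ?_⟩
        by_cases hff : k j a = .ff
        · simp [hff, Trn.tsubst, synth]
        · simp [hff, tsubst_synth_zero (hk j a ha)]

theorem exists_tStep_synth_conj {n : ℕ} {G : Fin n → Set Act} (k : Fin n → Act → Frm Act)
    {j : Fin n} {a : Act} (ha : a ∈ G j) :
    ∃ μ e', TStep (synth (.conj n fun j => .box (G j) (k j))) (some a, μ) e' :=
  ⟨_, _, .fix (by simp only [synth, Trn.tsubst]; exact .sel j (.prf ⟨a, ha, rfl⟩))⟩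

theorem tStep_synth_of_closed {χ : Frm Act} (hc : χ.Closed) (hnf : χ.IsNF)
    {l : Option Act × Option Act} {e' : Trn Act} (h : TStep (synth χ) l e') :
    l.1.isSome ∧ (l.2 = none → Mimics e' χ) := by
  generalize he : synth χ = e at h
  induction h generalizing χ with
  | id a => exact ⟨rfl, nofun⟩
  | prf | sel => cases hnf <;> simp [synth] at he
  | @fix x e₀ l e' h ih =>
    cases hnf with
    | max X φ hfree hφ =>
      simp only [synth, Trn.fix.injEq] at he
      obtain ⟨rfl, rfl⟩ := he
      have hnf := Frm.IsNF.max X φ hfree hφ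
      obtain ⟨hl, hm⟩ := ih hc.unfold (hnf.unfold hc) (tsubst_synth φ X (by simp)).symm
      exact ⟨hl, fun hτ l' e'' => (hm hτ l' e'').trans tStep_synth_max_iff.symm⟩
    | conj n G k _ hk =>
      have hstep : TStep (synth (.conj n fun i => .box (G i) (k i))) l e' := by
        rw [he]
        exact .fix h
      obtain ⟨j, a, -, hl, ⟨-, -, rfl⟩ | ⟨-, hout, -⟩⟩ := tStep_synth_conj hk hstep
      · exact ⟨by simp [hl], fun _ => mimics_synth _⟩
      · exact ⟨by simp [hl], fun hτ => by simp [hτ] at hout⟩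
    | tt | ff | var => simp [synth] at he

theorem Mimics.tauStar {L : LTS Act} {χ : Frm Act} (hc : χ.Closed) (hnf : χ.IsNF)
    {s s' : Trn Act × L.S} (hm : Mimics s.1 χ) (h : TauStar (instLTS L) s s') :
    Mimics s'.1 χ := by
  induction h with
  | refl => exact hm
  | tail _ hstep ih =>
    cases hstep with
    | trn _ ht => exact (tStep_synth_of_closed hc hnf ((ih _ _).1 ht)).2 rfl
    | asy _ => exact ih
    | ins ht => simpa using (tStep_synth_of_closed hc hnf ((ih _ _).1 ht)).1

theorem Mimics.wStep_conj {L : LTS Act} {n : ℕ} {G : Fin n → Set Act}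
    {k : Fin n → Act → Frm Act} (hdisj : ∀ i j : Fin n, i ≠ j → ∀ a ∈ G i, a ∉ G j)
    (hk : ∀ j, ∀ a ∈ G j, (k j a).IsNF)
    (hc : (Frm.conj n fun j => .box (G j) (k j)).Closed) {s q : Trn Act × L.S}
    (hm : Mimics s.1 (.conj n fun j => .box (G j) (k j))) {i : Fin n} {a : Act} (ha : a ∈ G i)
    (hw : WStep (instLTS L) s a q) : k i a ≠ .ff ∧ Mimics q.1 (k i a) := by
  obtain ⟨s₁, s₂, h₁, hstep, h₂⟩ := hw
  have hm₁ := hm.tauStar hc (.conj n G k hdisj hk) h₁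
  cases hstep with
  | trn _ ht =>
    obtain ⟨j, b, hb, -, ⟨-, hout, -⟩ | ⟨hff, hout, rfl⟩⟩ :=
      tStep_synth_conj hk ((hm₁ _ _).1 ht)
    · cases hout
    · cases hout
      obtain rfl : j = i := by_contra fun hji => hdisj j i hji a hb ha
      exact ⟨hff, (mimics_synth _).tauStar (hc.of_mem_guard ha) (hk j a ha) h₂⟩
  | ins ht =>
    obtain ⟨_, _, _, hin, -⟩ := tStep_synth_conj hk ((hm₁ _ _).1 ht)
    cases hin
  | ter _ hno _ =>
    obtain ⟨μ, e', ht⟩ := exists_tStep_synth_conj k ha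
    exact (hno μ e' ((hm₁ _ _).2 ht)).elim

def EnfRel (L : LTS Act) (s : Trn Act × L.S) (ψ : Frm Act) : Prop :=
  ∃ χ : Frm Act, χ.Closed ∧ χ.IsNF ∧ χ ≠ .ff ∧ Mimics s.1 χ ∧
    (ψ = χ ∨ ∃ n f i, χ = .conj n f ∧ ψ = f i)

theorem isSatRel_enfRel (L : LTS Act) : IsSatRel (instLTS L) (EnfRel L) := by
  refine ⟨?_, ?_, ?_, ?_⟩
  · rintro s ⟨χ, -, hnf, hne, -, rfl | ⟨n, f, i, rfl, hi⟩⟩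
    · exact hne rfl
    · cases hnf
      cases hi
  · rintro s n f ⟨χ, hc, hnf, hne, hm, rfl | ⟨m, g, j, rfl, hj⟩⟩ i
    · exact ⟨_, hc, hnf, hne, hm, .inr ⟨n, f, i, rfl, rfl⟩⟩
    · cases hnf
      cases hj
  · rintro s G k ⟨χ, hc, hnf, -, hm, rfl | ⟨m, g, j, rfl, hj⟩⟩ a ha q hq
    · cases hnf
    · cases hnf with
      | conj _ Gs ks hdisj hk =>
        cases hj
        obtain ⟨hff, hmq⟩ := hm.wStep_conj hdisj hk hc ha hq
        exact ⟨_, hc.of_mem_guard ha, hk j a ha, hff, hmq, .inl rfl⟩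
  · rintro s X φ ⟨χ, hc, hnf, -, hm, rfl | ⟨m, g, j, rfl, hj⟩⟩
    · exact ⟨_, hc.unfold, hnf.unfold hc, hnf.unfold_ne_ff, hm.unfold, .inl rfl⟩
    · cases hnf
      cases hj

/-- Enforcement Soundness: for every system p and closed
φ ∈ SHMLnf, if φ ∈ Sat then ⟦φ⟧e[p] ∈ ⟦φ⟧. -/
theorem enforcement_soundness (Act : Type) (L : LTS Act) (φ : Frm Act)
    (hclosed : φ.Closed) (hnf : φ.IsNF) (p : L.S) (hsat : SatIn L φ) :
    (synth φ, p) ∈ Sem (instLTS L) φ := by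
  have hne : φ ≠ .ff := by
    rintro rfl
    simp [SatIn, Sem, sem] at hsat
  exact (isSatRel_enfRel L).mem_Sem hclosed ⟨φ, hclosed, hnf, hne, mimics_synth φ, .inl rfl⟩

end Enf
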